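/- arXiv:1503.06160 — 2 statements merged into one kernel-verified Lean document; each statement's English description precedes it below -/
import Mathlib

section
/- Let X and M be finite-dimensional real inner product spaces, a : X × X → ℝ a bounded bilinear form, b : X × M → ℝ a bounded bilinear form. Let X⁰ = {x ∈ X : b(x, m) = 0 for all m ∈ M}. Assume: (i) a is coercive on X⁰, i.e. a(x,x) ≥ α‖x‖² for all x ∈ X⁰ with α > 0; (ii) b satisfies the inf-sup condition: inf_{0≠m∈M} sup_{0≠x∈X} b(x,m)/(‖x‖‖m‖) ≥ β > 0. Then for every pair of linear functionals θ ∈ X*, ψ ∈ M*, there exists a unique (x, m) ∈ X × M with a(x, y) + b(y, m) = θ(y) for all y ∈ X and b(x, n) = ψ(n) for all n ∈ M, and ‖x‖ + ‖m‖ ≤ C(‖θ‖ + ‖ψ‖) for a constant C depending only on α, β, and the boundedness constants. -/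
/-!
Since the spaces are finite-dimensional, the saddle-point operator
`(x, m) ↦ (a x + b(·, m), b x)` maps `X × M` to a space of the same dimension, so existence and
uniqueness both follow from the a priori estimate applied to zero data.

For the estimate, split `x = x₀ + x₁` orthogonally along the range `K` of the Riesz representative
`n ↦ b(·, n)`. Then `x₀ ∈ Kᗮ` lies in the kernel of `b`, where `a` is coercive, and `x₁ = b(·, m')`
for some `m'`; the inf-sup condition gives `β ‖m'‖ ≤ ‖x₁‖`, and `‖x₁‖² = b(x₁, m') = ψ(m')` then
bounds `x₁` by `‖ψ‖ / β`. Coercivity bounds `x₀`, and the inf-sup condition once more bounds `m`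
through the first equation.
-/

open RealInnerProductSpace

section SaddleOperator

variable {K X M : Type*} [Field K] [AddCommGroup X] [Module K X] [AddCommGroup M] [Module K M]

def saddleOperator (a : X →ₗ[K] X →ₗ[K] K) (b : X →ₗ[K] M →ₗ[K] K) :
    X × M →ₗ[K] Module.Dual K X × Module.Dual K M :=
  (a ∘ₗ LinearMap.fst K X M + b.flip ∘ₗ LinearMap.snd K X M).prod (b ∘ₗ LinearMap.fst K X M)

lemma saddleOperator_eq_iff {a : X →ₗ[K] X →ₗ[K] K} {b : X →ₗ[K] M →ₗ[K] K} {p : X × M}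
    {f : Module.Dual K X} {g : Module.Dual K M} :
    saddleOperator a b p = (f, g) ↔ (∀ y, a p.1 y + b y p.2 = f y) ∧ ∀ n, b p.1 n = g n := by
  simp [saddleOperator, Prod.ext_iff, LinearMap.ext_iff]

lemma existsUnique_saddleOperator_eq [FiniteDimensional K X] [FiniteDimensional K M]
    {a : X →ₗ[K] X →ₗ[K] K} {b : X →ₗ[K] M →ₗ[K] K}
    (hinj : Function.Injective (saddleOperator a b)) (f : Module.Dual K X × Module.Dual K M) :
    ∃! p, saddleOperator a b p = f := by
  have hdim : Module.finrank K (X × M) = Module.finrank K (Module.Dual K X × Module.Dual K M) := by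
    simp only [Module.finrank_prod, Subspace.dual_finrank_eq]
  exact Function.Bijective.existsUnique
    ⟨hinj, (LinearMap.injective_iff_surjective_of_finrank_eq_finrank hdim).mp hinj⟩ f

end SaddleOperator

lemma ContinuousLinearMap.apply_le_opNorm_mul {E : Type*} [SeminormedAddCommGroup E]
    [NormedSpace ℝ E] (f : E →L[ℝ] ℝ) (x : E) : f x ≤ ‖f‖ * ‖x‖ :=
  (le_abs_self _).trans (f.le_opNorm x)

lemma mul_norm_le_of_infsup {X M : Type*} [NormedAddCommGroup X] [Module ℝ X]
    [NormedAddCommGroup M] [Module ℝ M] {b : X →ₗ[ℝ] M →ₗ[ℝ] ℝ} {β c : ℝ} {m : M}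
    (h_infsup : ∃ x : X, x ≠ 0 ∧ β * ‖x‖ * ‖m‖ ≤ b x m) (hc : ∀ x, b x m ≤ c * ‖x‖) :
    β * ‖m‖ ≤ c := by
  obtain ⟨x, hx, hxm⟩ := h_infsup
  refine le_of_mul_le_mul_right ?_ (norm_pos_iff.mpr hx)
  linarith [hc x]

/-- With `κ = (1 + Ca / β) / α + 1 / β`, per unit of `‖θ‖ + ‖ψ‖` the solution has `‖x‖ ≤ κ` and
`‖m‖ ≤ (1 + Ca κ) / β`. -/
noncomputable def brezziConst (α β Ca : ℝ) : ℝ := ((1 + Ca / β) / α + 1 / β) * (1 + Ca / β) + 1 / β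

section InnerProduct

variable {X M : Type*} [NormedAddCommGroup X] [InnerProductSpace ℝ X]
  [NormedAddCommGroup M] [InnerProductSpace ℝ M]
  {a : X →ₗ[ℝ] X →ₗ[ℝ] ℝ} {b : X →ₗ[ℝ] M →ₗ[ℝ] ℝ} {α β Ca : ℝ}

lemma exists_inner_eq_flip [FiniteDimensional ℝ X] (b : X →ₗ[ℝ] M →ₗ[ℝ] ℝ) :
    ∃ B : M →ₗ[ℝ] X, ∀ n y, ⟪B n, y⟫ = b y n := by
  have hinj : Function.Injective (innerₗ X) := (injective_iff_map_eq_zero _).mpr fun x hx =>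
    inner_self_eq_zero.mp (LinearMap.congr_fun hx x)
  let riesz := LinearMap.linearEquivOfInjective (innerₗ X) hinj Subspace.dual_finrank_eq.symm
  exact ⟨riesz.symm ∘ₗ b.flip, fun n y => LinearMap.congr_fun (riesz.apply_symm_apply (b.flip n)) y⟩

lemma exists_add_of_infsup [FiniteDimensional ℝ X] (hβ : 0 ≤ β)
    (h_infsup : ∀ m : M, ∃ x : X, x ≠ 0 ∧ β * ‖x‖ * ‖m‖ ≤ b x m) (x : X) :
    ∃ x₀ x₁, x = x₀ + x₁ ∧ (∀ n, b x₀ n = 0) ∧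
      ∀ c, 0 ≤ c → (∀ n, b x₁ n ≤ c * ‖n‖) → β * ‖x₁‖ ≤ c := by
  obtain ⟨B, hB⟩ := exists_inner_eq_flip b
  obtain ⟨_, ⟨m', rfl⟩, x₀, hx₀, rfl⟩ := (LinearMap.range B).exists_add_mem_mem_orthogonal x
  refine ⟨x₀, B m', add_comm _ _, fun n => ?_, fun c hc hbound => ?_⟩
  · rw [← hB]
    exact (Submodule.mem_orthogonal _ _).mp hx₀ _ ⟨n, rfl⟩
  have hm' : β * ‖m'‖ ≤ ‖B m'‖ := mul_norm_le_of_infsup (h_infsup m') fun w => by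
    rw [← hB]
    exact real_inner_le_norm _ _
  have hsq : ‖B m'‖ ^ 2 ≤ c * ‖m'‖ := by
    rw [← real_inner_self_eq_norm_sq, hB]
    exact hbound m'
  rcases (norm_nonneg (B m')).eq_or_lt with h | h
  · rw [← h, mul_zero]
    exact hc
  · -- `β ‖B m'‖² ≤ β c ‖m'‖ ≤ c ‖B m'‖`
    refine le_of_mul_le_mul_right ?_ h
    nlinarith [mul_le_mul_of_nonneg_left hm' hc, mul_le_mul_of_nonneg_left hsq hβ]

lemma mul_norm_le_of_coercive (hCa : 0 ≤ Ca) (h_bdd_a : ∀ x y, |a x y| ≤ Ca * ‖x‖ * ‖y‖)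
    (h_coer : ∀ x : X, (∀ m : M, b x m = 0) → α * ‖x‖ ^ 2 ≤ a x x)
    {θ : X →L[ℝ] ℝ} {x₀ x₁ : X} {m : M} (hb₀ : ∀ n, b x₀ n = 0)
    (heq : ∀ y, a (x₀ + x₁) y + b y m = θ y) : α * ‖x₀‖ ≤ ‖θ‖ + Ca * ‖x₁‖ := by
  have hsq : α * ‖x₀‖ * ‖x₀‖ ≤ (‖θ‖ + Ca * ‖x₁‖) * ‖x₀‖ := calc
    α * ‖x₀‖ * ‖x₀‖ = α * ‖x₀‖ ^ 2 := by ring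
    _ ≤ a x₀ x₀ := h_coer x₀ hb₀
    _ = θ x₀ - a x₁ x₀ := by
      have := heq x₀
      rw [hb₀ m, map_add, LinearMap.add_apply] at this
      linarith
    _ ≤ (‖θ‖ + Ca * ‖x₁‖) * ‖x₀‖ := by
      linarith [θ.apply_le_opNorm_mul x₀, neg_le_abs (a x₁ x₀), h_bdd_a x₁ x₀]
  rcases (norm_nonneg x₀).eq_or_lt with h | h
  · rw [← h, mul_zero]
    positivity
  · exact le_of_mul_le_mul_right hsq h

lemma mul_norm_le_of_infsup_of_eq (h_bdd_a : ∀ x y, |a x y| ≤ Ca * ‖x‖ * ‖y‖)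
    {θ : X →L[ℝ] ℝ} {x : X} {m : M} (h_infsup : ∃ w : X, w ≠ 0 ∧ β * ‖w‖ * ‖m‖ ≤ b w m)
    (heq : ∀ y, a x y + b y m = θ y) : β * ‖m‖ ≤ ‖θ‖ + Ca * ‖x‖ :=
  mul_norm_le_of_infsup h_infsup fun w => by
    linarith [heq w, θ.apply_le_opNorm_mul w, neg_le_abs (a x w), h_bdd_a x w]

lemma brezziConst_pos (hα : 0 < α) (hβ : 0 < β) (hCa : 0 ≤ Ca) : 0 < brezziConst α β Ca := by
  unfold brezziConst
  positivity

lemma norm_add_norm_le_brezziConst [FiniteDimensional ℝ X] (hα : 0 < α) (hβ : 0 < β)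
    (hCa : 0 ≤ Ca) (h_bdd_a : ∀ x y, |a x y| ≤ Ca * ‖x‖ * ‖y‖)
    (h_coer : ∀ x : X, (∀ m : M, b x m = 0) → α * ‖x‖ ^ 2 ≤ a x x)
    (h_infsup : ∀ m : M, ∃ x : X, x ≠ 0 ∧ β * ‖x‖ * ‖m‖ ≤ b x m)
    {θ : X →L[ℝ] ℝ} {ψ : M →L[ℝ] ℝ} {x : X} {m : M}
    (h₁ : ∀ y, a x y + b y m = θ y) (h₂ : ∀ n, b x n = ψ n) :
    ‖x‖ + ‖m‖ ≤ brezziConst α β Ca * (‖θ‖ + ‖ψ‖) := by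
  obtain ⟨x₀, x₁, rfl, hb₀, hx₁_bound⟩ := exists_add_of_infsup hβ.le h_infsup x
  obtain ⟨S, hS⟩ : ∃ S, S = ‖θ‖ + ‖ψ‖ := ⟨_, rfl⟩
  obtain ⟨κ, hκ⟩ : ∃ κ, κ = (1 + Ca / β) / α + 1 / β := ⟨_, rfl⟩
  have hx₁ : ‖x₁‖ ≤ S / β := by
    rw [le_div_iff₀' hβ]
    refine (hx₁_bound ‖ψ‖ (norm_nonneg _) fun n => ?_).trans (by linarith [norm_nonneg θ])
    calc b x₁ n = b (x₀ + x₁) n := by rw [map_add, LinearMap.add_apply, hb₀, zero_add]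
      _ ≤ ‖ψ‖ * ‖n‖ := (h₂ n).trans_le (ψ.apply_le_opNorm_mul n)
  have hx₀ : ‖x₀‖ ≤ (1 + Ca / β) / α * S := by
    rw [div_mul_eq_mul_div, le_div_iff₀' hα]
    calc α * ‖x₀‖ ≤ ‖θ‖ + Ca * ‖x₁‖ := mul_norm_le_of_coercive hCa h_bdd_a h_coer hb₀ h₁
      _ ≤ S + Ca * (S / β) := by gcongr; linarith [norm_nonneg ψ]
      _ = (1 + Ca / β) * S := by ring
  have hx : ‖x₀ + x₁‖ ≤ κ * S := calc
    ‖x₀ + x₁‖ ≤ ‖x₀‖ + ‖x₁‖ := norm_add_le _ _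
    _ ≤ (1 + Ca / β) / α * S + S / β := add_le_add hx₀ hx₁
    _ = κ * S := by rw [hκ]; ring
  have hm : β * ‖m‖ ≤ S + Ca * (κ * S) :=
    (mul_norm_le_of_infsup_of_eq h_bdd_a (h_infsup m) h₁).trans
      (by gcongr; linarith [norm_nonneg ψ])
  calc ‖x₀ + x₁‖ + ‖m‖ ≤ κ * S + (S + Ca * (κ * S)) / β :=
        add_le_add hx ((le_div_iff₀' hβ).mpr hm)
    _ = brezziConst α β Ca * (‖θ‖ + ‖ψ‖) := by rw [brezziConst, ← hκ, ← hS]; ring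

lemma saddleOperator_injective [FiniteDimensional ℝ X] (hα : 0 < α) (hβ : 0 < β)
    (hCa : 0 ≤ Ca) (h_bdd_a : ∀ x y, |a x y| ≤ Ca * ‖x‖ * ‖y‖)
    (h_coer : ∀ x : X, (∀ m : M, b x m = 0) → α * ‖x‖ ^ 2 ≤ a x x)
    (h_infsup : ∀ m : M, ∃ x : X, x ≠ 0 ∧ β * ‖x‖ * ‖m‖ ≤ b x m) :
    Function.Injective (saddleOperator a b) := by
  refine (injective_iff_map_eq_zero _).mpr fun p hp => ?_
  rw [← Prod.mk_zero_zero, saddleOperator_eq_iff] at hp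
  have hle := norm_add_norm_le_brezziConst (θ := 0) (ψ := 0) hα hβ hCa h_bdd_a h_coer h_infsup
    (by simpa using hp.1) (by simpa using hp.2)
  simp only [norm_zero, add_zero, mul_zero] at hle
  exact Prod.ext (norm_le_zero_iff.mp (by linarith [norm_nonneg p.2]))
    (norm_le_zero_iff.mp (by linarith [norm_nonneg p.1]))

end InnerProduct

theorem stmt_8_general
    (X M : Type*)
    [NormedAddCommGroup X] [InnerProductSpace ℝ X] [FiniteDimensional ℝ X]
    [NormedAddCommGroup M] [InnerProductSpace ℝ M] [FiniteDimensional ℝ M]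
    (a : X →ₗ[ℝ] X →ₗ[ℝ] ℝ) (b : X →ₗ[ℝ] M →ₗ[ℝ] ℝ)
    (Ca α β : ℝ)
    (h_bdd_a : ∀ x y, |a x y| ≤ Ca * ‖x‖ * ‖y‖)
    (hα : 0 < α)
    (h_coer : ∀ x : X, (∀ m : M, b x m = 0) → α * ‖x‖ ^ 2 ≤ a x x)
    (hβ : 0 < β)
    (h_infsup : ∀ m : M, ∃ x : X, x ≠ 0 ∧ β * ‖x‖ * ‖m‖ ≤ b x m) :
    ∃ C : ℝ, 0 < C ∧ ∀ (θ : X →L[ℝ] ℝ) (ψ : M →L[ℝ] ℝ),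
      (∃! p : X × M,
        (∀ y : X, a p.1 y + b y p.2 = θ y) ∧ (∀ n : M, b p.1 n = ψ n)) ∧
      (∀ p : X × M,
        ((∀ y : X, a p.1 y + b y p.2 = θ y) ∧ (∀ n : M, b p.1 n = ψ n)) →
        ‖p.1‖ + ‖p.2‖ ≤ C * (‖θ‖ + ‖ψ‖)) := by
  have hCa : 0 ≤ max Ca 0 := le_max_right _ _
  have h_bdd_a' : ∀ x y, |a x y| ≤ max Ca 0 * ‖x‖ * ‖y‖ := fun x y =>
    (h_bdd_a x y).trans (by gcongr; exact le_max_left _ _)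
  have hinj := saddleOperator_injective hα hβ hCa h_bdd_a' h_coer h_infsup
  refine ⟨brezziConst α β (max Ca 0), brezziConst_pos hα hβ hCa, fun θ ψ => ⟨?_, fun p hp =>
    norm_add_norm_le_brezziConst hα hβ hCa h_bdd_a' h_coer h_infsup hp.1 hp.2⟩⟩
  simpa only [saddleOperator_eq_iff, ContinuousLinearMap.coe_coe] using
    existsUnique_saddleOperator_eq hinj ((θ : X →ₗ[ℝ] ℝ), (ψ : M →ₗ[ℝ] ℝ))

/-- Brezzi theory for saddle-point problems in finite dimensions. -/
theorem stmt_8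
    (X M : Type*)
    [NormedAddCommGroup X] [InnerProductSpace ℝ X] [FiniteDimensional ℝ X]
    [NormedAddCommGroup M] [InnerProductSpace ℝ M] [FiniteDimensional ℝ M]
    (a : X →ₗ[ℝ] X →ₗ[ℝ] ℝ) (b : X →ₗ[ℝ] M →ₗ[ℝ] ℝ)
    (Ca Cb α β : ℝ)
    (h_bdd_a : ∀ x y, |a x y| ≤ Ca * ‖x‖ * ‖y‖)
    (h_bdd_b : ∀ x m, |b x m| ≤ Cb * ‖x‖ * ‖m‖)
    (hα : 0 < α)
    (h_coer : ∀ x : X, (∀ m : M, b x m = 0) → α * ‖x‖ ^ 2 ≤ a x x)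
    (hβ : 0 < β)
    (h_infsup : ∀ m : M, ∃ x : X, x ≠ 0 ∧ β * ‖x‖ * ‖m‖ ≤ b x m) :
    ∃ C : ℝ, 0 < C ∧ ∀ (θ : X →L[ℝ] ℝ) (ψ : M →L[ℝ] ℝ),
      (∃! p : X × M,
        (∀ y : X, a p.1 y + b y p.2 = θ y) ∧ (∀ n : M, b p.1 n = ψ n)) ∧
      (∀ p : X × M,
        ((∀ y : X, a p.1 y + b y p.2 = θ y) ∧ (∀ n : M, b p.1 n = ψ n)) →
        ‖p.1‖ + ‖p.2‖ ≤ C * (‖θ‖ + ‖ψ‖)) :=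
  stmt_8_general X M a b Ca α β h_bdd_a hα h_coer hβ h_infsup
end

section
/- Let H be a real inner product space and let j, σ ∈ H with curl : H → K linear into another inner product space K. If (curl j − curl σ, C) = −(r, div C) for all C in a subspace V ⊂ K with curl j − curl σ ∈ V, and div : V → L is surjective onto a space L containing r, then taking C = curl j − curl σ with div C = 0 (assuming curl(range) is divergence-free) yields curl j = curl σ, and consequently (r, div C) = 0 for all C ∈ V, which forces r = 0 by surjectivity of div. -/
open scoped RealInnerProductSpace

section SaddlePoint

variable {𝕜 K L : Type*} [RCLike 𝕜] [NormedAddCommGroup K] [InnerProductSpace 𝕜 K]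
  [NormedAddCommGroup L] [InnerProductSpace 𝕜 L] {div : K →ₗ[𝕜] L} {V : Submodule 𝕜 K}

theorem eq_zero_of_inner_eq_neg_inner_map_of_map_eq_zero {u : K} {r : L}
    (h_eq : ∀ C ∈ V, inner 𝕜 u C = -inner 𝕜 r (div C)) (hu : u ∈ V) (hdiv : div u = 0) :
    u = 0 := by
  have h := h_eq u hu
  rwa [hdiv, inner_zero_right, neg_zero, inner_self_eq_zero] at h

theorem eq_zero_of_forall_mem_inner_map_eq_zero {r : L}
    (h : ∀ C ∈ V, inner 𝕜 r (div C) = 0) (hr : ∃ C ∈ V, div C = r) : r = 0 := by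
  obtain ⟨C, hC, rfl⟩ := hr
  exact inner_self_eq_zero.mp (h C hC)

end SaddlePoint

/-- Abstract vanishing of the Lagrange multiplier in the B–j scheme. -/
theorem stmt_18
    (H K L : Type*) [NormedAddCommGroup H] [InnerProductSpace ℝ H]
    [NormedAddCommGroup K] [InnerProductSpace ℝ K]
    [NormedAddCommGroup L] [InnerProductSpace ℝ L]
    (curl : H →ₗ[ℝ] K) (div : K →ₗ[ℝ] L) (V : Submodule ℝ K)
    (j σ : H) (r : L)
    (h_eq : ∀ C ∈ V, ⟪curl j - curl σ, C⟫ = -⟪r, div C⟫)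
    (h_mem : curl j - curl σ ∈ V)
    (h_divfree : ∀ x : H, div (curl x) = 0)
    (h_surj : ∀ l : L, ∃ C ∈ V, div C = l) :
    curl j = curl σ ∧ r = 0 := by
  have hdiv : div (curl j - curl σ) = 0 := by
    rw [map_sub, h_divfree, h_divfree, sub_zero]
  have hcurl : curl j - curl σ = 0 :=
    eq_zero_of_inner_eq_neg_inner_map_of_map_eq_zero h_eq h_mem hdiv
  refine ⟨sub_eq_zero.mp hcurl, eq_zero_of_forall_mem_inner_map_eq_zero (div := div) ?_ (h_surj r)⟩
  intro C hC
  simpa only [hcurl, inner_zero_left, zero_eq_neg] using h_eq C hC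
end
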